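/- Let X be a Banach space with numerical radius a norm on L(X), V an n-dimensional subspace of L(X)_w, and T ∈ L(X)_w. Suppose there exist t₁,…,t_h > 0 with Σ tᵢ = 1, and for each i a net (x*_{iα} ⊗ x_{iα})_α in A = {x*⊗x : x* ∈ B_{X*}, x ∈ B_X, |x*(x)|=‖x*‖‖x‖} such that lim_α x*_{iα}(T x_{iα}) = w(T) for each i, and Σᵢ tᵢ lim_α x*_{iα}(S x_{iα}) = 0 for every S ∈ V. Then T ⊥_w V. -/
import Mathlib


variable {𝕜 : Type*} [RCLike 𝕜] {X : Type*} [NormedAddCommGroup X] [NormedSpace 𝕜 X]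

/-- The numerical radius of a bounded linear operator on a Banach space. -/
noncomputable def nrad (T : X →L[𝕜] X) : ℝ :=
  sSup {r : ℝ | ∃ (x : X) (f : X →L[𝕜] 𝕜), ‖x‖ = 1 ∧ ‖f‖ = 1 ∧ f x = 1 ∧ r = ‖f (T x)‖}

/-- The functional `x* ⊗ x : T ↦ x*(Tx)` on `L(X)`. -/
noncomputable def tensor (f : X →L[𝕜] 𝕜) (x : X) : (X →L[𝕜] X) →L[𝕜] 𝕜 :=
  f.comp (ContinuousLinearMap.apply 𝕜 X x)

/-- The dual norm induced on functionals by the numerical radius norm. -/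
noncomputable def wdual (g : (X →L[𝕜] X) →L[𝕜] 𝕜) : ℝ :=
  sSup {r : ℝ | ∃ T : X →L[𝕜] X, nrad T ≤ 1 ∧ r = ‖g T‖}

lemma nrad_nonneg (U : X →L[𝕜] X) : 0 ≤ nrad U :=
  Real.sSup_nonneg (by rintro r ⟨x, f, _, _, _, rfl⟩; positivity)

lemma nrad_bddAbove (U : X →L[𝕜] X) :
    BddAbove {r : ℝ | ∃ (x : X) (f : X →L[𝕜] 𝕜), ‖x‖ = 1 ∧ ‖f‖ = 1 ∧ f x = 1 ∧ r = ‖f (U x)‖} := by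
  refine ⟨‖U‖, ?_⟩
  rintro r ⟨x, f, hx, hf, _, rfl⟩
  calc ‖f (U x)‖ ≤ ‖f‖ * ‖U x‖ := f.le_opNorm _
    _ ≤ 1 * (‖U‖ * ‖x‖) :=
        mul_le_mul (le_of_eq hf) (U.le_opNorm _) (norm_nonneg _) zero_le_one
    _ = ‖U‖ := by rw [hx]; ring

lemma pair_le_nrad (U : X →L[𝕜] X) (f : X →L[𝕜] 𝕜) (x : X)
    (hf : ‖f‖ ≤ 1) (hx : ‖x‖ ≤ 1) (he : ‖f x‖ = ‖f‖ * ‖x‖) :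
    ‖f (U x)‖ ≤ nrad U := by
  rcases eq_or_ne (f x) 0 with h0 | h0
  · have h1 : ‖f‖ * ‖x‖ = 0 := by rw [← he, h0, norm_zero]
    rcases mul_eq_zero.1 h1 with h2 | h2
    · have hh : f = 0 := norm_eq_zero.1 h2
      simpa [hh] using nrad_nonneg U
    · have hh : x = 0 := norm_eq_zero.1 h2
      simpa [hh] using nrad_nonneg U
  · have hne : ‖f‖ * ‖x‖ ≠ 0 := by rw [← he]; exact norm_ne_zero_iff.2 h0
    have hfn : ‖f‖ ≠ 0 := left_ne_zero_of_mul hne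
    have hxn : ‖x‖ ≠ 0 := right_ne_zero_of_mul hne
    have hfp : 0 < ‖f‖ := (norm_nonneg f).lt_of_ne (Ne.symm hfn)
    have hxp : 0 < ‖x‖ := (norm_nonneg x).lt_of_ne (Ne.symm hxn)
    set u : 𝕜 := (‖f x‖ : ℝ) / (f x) with hudef
    have hu : ‖u‖ = 1 := by
      rw [hudef, norm_div, RCLike.norm_ofReal, abs_of_nonneg (norm_nonneg (f x))]
      exact div_self (norm_ne_zero_iff.2 h0)
    set f' : X →L[𝕜] 𝕜 := (u * ((‖f‖⁻¹ : ℝ) : 𝕜)) • f with hf'def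
    set x' : X := ((‖x‖⁻¹ : ℝ) : 𝕜) • x with hx'def
    have hx1 : ‖x'‖ = 1 := by
      rw [hx'def, norm_smul, RCLike.norm_ofReal, abs_of_nonneg (inv_nonneg.2 (norm_nonneg x))]
      exact inv_mul_cancel₀ hxn
    have hf1 : ‖f'‖ = 1 := by
      have hns : ‖f'‖ = ‖u * ((‖f‖⁻¹ : ℝ) : 𝕜)‖ * ‖f‖ := by rw [hf'def]; exact norm_smul (u * ((‖f‖⁻¹ : ℝ) : 𝕜)) f
      rw [hns, norm_mul, hu, RCLike.norm_ofReal, abs_of_nonneg (inv_nonneg.2 (norm_nonneg f))]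
      field_simp
    have key : u * f x = (‖f x‖ : 𝕜) := div_mul_cancel₀ _ h0
    have hfx1 : f' x' = 1 := by
      have : f' x' = (u * f x) * (((‖f‖ : 𝕜))⁻¹ * ((‖x‖ : 𝕜))⁻¹) := by
        simp only [hf'def, hx'def, ContinuousLinearMap.smul_apply, map_smul, smul_eq_mul]
        push_cast
        ring
      rw [this, key, show (‖f x‖ : 𝕜) = (‖f‖ : 𝕜) * (‖x‖ : 𝕜) by push_cast [he]; ring]
      have c1 : (‖f‖ : 𝕜) ≠ 0 := by exact_mod_cast hfn
      have c2 : (‖x‖ : 𝕜) ≠ 0 := by exact_mod_cast hxn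
      field_simp
    have hle : ‖f' (U x')‖ ≤ nrad U :=
      le_csSup (nrad_bddAbove U) ⟨x', f', hx1, hf1, hfx1, rfl⟩
    have heq : ‖f' (U x')‖ = ‖f‖⁻¹ * ‖x‖⁻¹ * ‖f (U x)‖ := by
      simp only [hf'def, hx'def, ContinuousLinearMap.smul_apply, map_smul, smul_eq_mul,
        norm_mul, hu, RCLike.norm_ofReal, abs_of_nonneg (inv_nonneg.2 (norm_nonneg _))]
      ring
    have h2 : ‖f (U x)‖ ≤ ‖f' (U x')‖ := by
      rw [heq]
      have i1 : 1 ≤ ‖f‖⁻¹ := (one_le_inv₀ hfp).2 hf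
      have i2 : 1 ≤ ‖x‖⁻¹ := (one_le_inv₀ hxp).2 hx
      nlinarith [norm_nonneg (f (U x)), mul_le_mul i1 i2 zero_le_one (le_trans zero_le_one i1)]
    linarith

/-- Sufficient condition for `T ⊥_w V` in a general Banach space, via nets in
`A = {x*⊗x : ‖x*‖≤1, ‖x‖≤1, |x*(x)| = ‖x*‖‖x‖}` (formalized with filters). -/
theorem stmt_13 {X : Type*} [NormedAddCommGroup X] [NormedSpace 𝕜 X] [CompleteSpace X]
    (hw : ∀ T : X →L[𝕜] X, nrad T = 0 → T = 0)
    (n : ℕ) (V : Submodule 𝕜 (X →L[𝕜] X)) (hV : Module.finrank 𝕜 V = n)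
    (T : X →L[𝕜] X) (h : ℕ) (hh : 0 < h)
    (t : Fin h → ℝ) (ht : ∀ i, 0 < t i) (hts : ∑ i, t i = 1)
    (ι : Type) (F : Filter ι) (hF : F.NeBot)
    (f : Fin h → ι → (X →L[𝕜] 𝕜)) (x : Fin h → ι → X)
    (hA : ∀ i α, ‖f i α‖ ≤ 1 ∧ ‖x i α‖ ≤ 1 ∧ ‖f i α (x i α)‖ = ‖f i α‖ * ‖x i α‖)
    (hlimT : ∀ i, Filter.Tendsto (fun α => f i α (T (x i α))) F (nhds ((nrad T : 𝕜))))
    (hlimS : ∀ S ∈ V, ∃ L : Fin h → 𝕜,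
      (∀ i, Filter.Tendsto (fun α => f i α (S (x i α))) F (nhds (L i))) ∧
      (∑ i, (t i : 𝕜) * L i = 0)) :
    ∀ S ∈ V, ∀ c : 𝕜, nrad T ≤ nrad (T + c • S) := by
  intro S hS c
  obtain ⟨L, hL, hLs⟩ := hlimS S hS
  set M := nrad (T + c • S) with hM
  have key : ∀ i, ‖(nrad T : 𝕜) + c * L i‖ ≤ M := by
    intro i
    have htend : Filter.Tendsto (fun α => f i α ((T + c • S) (x i α))) F
        (nhds ((nrad T : 𝕜) + c * L i)) := by
      have := (hlimT i).add ((hL i).const_mul c)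
      simpa [ContinuousLinearMap.add_apply, ContinuousLinearMap.smul_apply, map_add,
        map_smul, smul_eq_mul] using this
    have hbd : ∀ᶠ α in F, ‖f i α ((T + c • S) (x i α))‖ ≤ M :=
      Filter.Eventually.of_forall fun α =>
        pair_le_nrad _ _ _ (hA i α).1 (hA i α).2.1 (hA i α).2.2
    exact le_of_tendsto htend.norm hbd
  have hsum : ∑ i, (t i : 𝕜) * ((nrad T : 𝕜) + c * L i) = (nrad T : 𝕜) := by
    have e1 : ∑ i, (t i : 𝕜) * ((nrad T : 𝕜) + c * L i)
        = (∑ i, (t i : 𝕜)) * (nrad T : 𝕜) + c * ∑ i, (t i : 𝕜) * L i := by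
      rw [Finset.sum_mul, Finset.mul_sum, ← Finset.sum_add_distrib]
      congr 1; ext i; ring
    rw [e1, hLs, show (∑ i, (t i : 𝕜)) = 1 by rw [← RCLike.ofReal_sum, hts, RCLike.ofReal_one]]
    ring
  calc nrad T ≤ ‖(nrad T : 𝕜)‖ := by
        rw [RCLike.norm_ofReal]; exact le_abs_self _
    _ = ‖∑ i, (t i : 𝕜) * ((nrad T : 𝕜) + c * L i)‖ := by rw [hsum]
    _ ≤ ∑ i, ‖(t i : 𝕜) * ((nrad T : 𝕜) + c * L i)‖ := norm_sum_le _ _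
    _ ≤ ∑ i, t i * M := by
        apply Finset.sum_le_sum
        intro i _
        rw [norm_mul, RCLike.norm_ofReal, abs_of_pos (ht i)]
        exact mul_le_mul_of_nonneg_left (key i) (ht i).le
    _ = M := by rw [← Finset.sum_mul, hts, one_mul]
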